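/- Let p be a prime, let G be a finite p-group, let A and B be subgroups of G with a fixed isomorphism φ : A → B, and suppose the HNN-extension G* = (G, t; t⁻¹At = B, φ) admits a homomorphism onto a finite p-group whose kernel intersects G trivially; equivalently, G embeds in a finite p-group X containing an element x with x⁻¹ax = φ(a) for all a ∈ A. Then for any chief series 1 = X₀ ≤ X₁ ≤ ⋯ ≤ Xₙ = X of X, the distinct members of the sequence Gᵢ = G ∩ Xᵢ (i = 0, …, n) form a chief series of G satisfying φ(A ∩ Gᵢ) = B ∩ Gᵢ for all i, and for every i and every a ∈ A ∩ Gᵢ₊₁ the elements φ(a) and a are congruent modulo Gᵢ. -/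

import Mathlib

/-!
Pulling back along the injection `ι` keeps each `Gᵢ = ι⁻¹(Xᵢ)` normal, and `[Gᵢ₊₁ : Gᵢ]` divides
`[Xᵢ₊₁ : Xᵢ] = p`. Each `Xᵢ` is normal, hence stable under conjugation by `x`, which gives
`φ(A ∩ Gᵢ) = B ∩ Gᵢ`. Finally, a normal subgroup of order `p` of a `p`-group is central, so
`Xᵢ₊₁/Xᵢ` is central in `X/Xᵢ`: `x` commutes with `a ∈ A ∩ Gᵢ₊₁` modulo `Xᵢ`, i.e. `φ(a) ≡ a`.
-/

/-- A group `X` is *residually a finite p-group* if every non-identity element is excluded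
by some normal subgroup of `p`-power index (equivalently, survives in some finite `p`-group
quotient). -/
def ResiduallyPGroup (p : ℕ) (X : Type*) [Group X] : Prop :=
  ∀ x : X, x ≠ 1 → ∃ N : Subgroup X, N.Normal ∧ x ∉ N ∧ ∃ k : ℕ, N.index = p ^ k

/-- A subgroup `H` of `G` is `(A,B,φ)`-compatible if `φ(A ∩ H) = B ∩ H`. -/
def Compatible {G : Type*} [Group G] {A B : Subgroup G} (φ : A ≃* B) (H : Subgroup G) : Prop :=
  (H.subgroupOf A).map φ.toMonoidHom = H.subgroupOf B

/-- A subgroup `H` of `G` is `(A,B,φ,p)`-compatible if there is a chain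
`H = G₀ ≤ G₁ ≤ ⋯ ≤ Gₙ = G` of normal `(A,B,φ)`-compatible subgroups of `G` in which every
quotient `Gᵢ₊₁/Gᵢ` has order `p` and `φ(a) ≡ a (mod Gᵢ)` for every `a ∈ A ∩ Gᵢ₊₁`. -/
def PCompatible (p : ℕ) {G : Type*} [Group G] {A B : Subgroup G} (φ : A ≃* B)
    (H : Subgroup G) : Prop :=
  ∃ (n : ℕ) (Gs : Fin (n + 1) → Subgroup G),
    Gs 0 = H ∧ Gs (Fin.last n) = ⊤ ∧ Monotone Gs ∧
    (∀ i, (Gs i).Normal ∧ Compatible φ (Gs i)) ∧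
    (∀ i : Fin n, (Gs i.castSucc).relIndex (Gs i.succ) = p ∧
      ∀ a : A, (a : G) ∈ Gs i.succ → (φ a : G) * (a : G)⁻¹ ∈ Gs i.castSucc)

namespace Subgroup

variable {G G' : Type*} [Group G] [Group G']

theorem relIndex_dvd_relIndex_of_le_right {H K L : Subgroup G} [H.Normal] (hKL : K ≤ L) :
    H.relIndex K ∣ H.relIndex L := by
  rw [← relIndex_sup_right K H, ← relIndex_sup_right L H]
  exact Dvd.intro _ (relIndex_mul_relIndex H _ _ le_sup_right (sup_le_sup_right hKL H))

theorem relIndex_comap_dvd (f : G →* G') (H K : Subgroup G') [H.Normal] :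
    (H.comap f).relIndex (K.comap f) ∣ H.relIndex K := by
  rw [relIndex_comap]
  exact relIndex_dvd_relIndex_of_le_right (map_comap_le f K)

end Subgroup

section PGroup

variable {p : ℕ} [hp : Fact p.Prime] {Q : Type*} [Group Q]

/-- Conjugation by a `p`-element acts on `N ≅ ℤ/p` through `Aut(ℤ/p)`, whose order `p - 1` is
prime to `p`. -/
theorem IsPGroup.le_center_of_card_eq_prime (hQ : IsPGroup p Q) (N : Subgroup Q) [N.Normal]
    (hN : Nat.card N = p) : N ≤ Subgroup.center Q := by
  have : Finite N := Nat.finite_of_card_ne_zero (hN ▸ hp.out.ne_zero)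
  have : IsCyclic N := isCyclic_of_prime_card hN
  have hAut : Nat.card (MulAut N) = p - 1 := by
    rw [IsCyclic.card_mulAut, hN, Nat.totient_prime hp.out]
  have hcop : p.Coprime (p - 1) :=
    (Nat.coprime_self_sub_right hp.out.one_le).mpr (Nat.coprime_one_right p)
  have hconj (g : Q) : (MulAut.conjNormal g : MulAut N) = 1 := by
    apply orderOf_eq_one_iff.mp
    apply Nat.Coprime.eq_one_of_dvd _ (hAut ▸ orderOf_dvd_natCard _)
    exact (hQ.orderOf_coprime hcop g).coprime_dvd_left (orderOf_map_dvd _ g)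
  refine fun n hn ↦ Subgroup.mem_center_iff.mpr fun g ↦ mul_inv_eq_iff_eq_mul.mp ?_
  simpa using congrArg (fun e : MulAut N ↦ ((e ⟨n, hn⟩ : N) : Q)) (hconj g)

theorem IsPGroup.commutator_mem_of_relIndex_eq_prime (hQ : IsPGroup p Q) {H K : Subgroup Q}
    [H.Normal] [K.Normal] (hHK : H.relIndex K = p) (g : Q) {k : Q} (hk : k ∈ K) :
    g⁻¹ * k * g * k⁻¹ ∈ H := by
  have hcard : Nat.card (K.map (QuotientGroup.mk' H)) = p := by
    rw [← Subgroup.relIndex_ker, QuotientGroup.ker_mk', hHK]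
  have hcentral := (hQ.to_quotient H).le_center_of_card_eq_prime _ hcard
    (Subgroup.mem_map_of_mem _ hk)
  have hcomm : (g : Q ⧸ H) * k = k * g := Subgroup.mem_center_iff.mp hcentral g
  rw [← QuotientGroup.eq_one_iff, QuotientGroup.mk_mul, QuotientGroup.mk_mul, QuotientGroup.mk_mul,
    QuotientGroup.mk_inv, QuotientGroup.mk_inv, mul_assoc _ _ (g : Q ⧸ H), ← hcomm]
  group

end PGroup

theorem compatible_of_forall_mem_iff {G : Type*} [Group G] {A B : Subgroup G} (φ : A ≃* B)
    {H : Subgroup G} (h : ∀ a : A, (a : G) ∈ H ↔ (φ a : G) ∈ H) : Compatible φ H := by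
  ext b
  simp only [Subgroup.mem_map, Subgroup.mem_subgroupOf]
  constructor
  · rintro ⟨a, ha, rfl⟩
    exact (h a).mp ha
  · intro hb
    refine ⟨φ.symm b, (h _).mpr ?_, φ.apply_symm_apply b⟩
    rwa [φ.apply_symm_apply]

theorem chief_series_pullback_of_embedding_general
    (p : ℕ) (hp : p.Prime) (G : Type*) [Group G]
    (A B : Subgroup G) (φ : A ≃* B)
    (X : Type*) [Group X] (hX : IsPGroup p X)
    (ι : G →* X) (hι : Function.Injective ι)
    (x : X) (hx : ∀ a : A, x⁻¹ * ι (a : G) * x = ι ((φ a : G)))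
    (n : ℕ) (Xs : Fin (n + 1) → Subgroup X)
    (hX0 : Xs 0 = ⊥) (hXn : Xs (Fin.last n) = ⊤) (hmono : Monotone Xs)
    (hnorm : ∀ i, (Xs i).Normal)
    (hchief : ∀ i : Fin n, (Xs i.castSucc).relIndex (Xs i.succ) = p) :
    ((Xs 0).comap ι = ⊥) ∧ ((Xs (Fin.last n)).comap ι = ⊤) ∧
    Monotone (fun i => (Xs i).comap ι) ∧
    (∀ i, ((Xs i).comap ι).Normal) ∧
    (∀ i : Fin n, ((Xs i.castSucc).comap ι).relIndex ((Xs i.succ).comap ι) = 1 ∨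
      ((Xs i.castSucc).comap ι).relIndex ((Xs i.succ).comap ι) = p) ∧
    (∀ i, Compatible φ ((Xs i).comap ι)) ∧
    (∀ i : Fin n, ∀ a : A, (a : G) ∈ (Xs i.succ).comap ι →
      (φ a : G) * (a : G)⁻¹ ∈ (Xs i.castSucc).comap ι) := by
  have := Fact.mk hp
  refine ⟨?_, ?_, fun i j hij ↦ Subgroup.comap_mono (hmono hij), fun i ↦ (hnorm i).comap ι,
    fun i ↦ ?_, fun i ↦ ?_, fun i a ha ↦ ?_⟩
  · rw [hX0, MonoidHom.comap_bot, MonoidHom.ker_eq_bot_iff]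
    exact hι
  · rw [hXn, Subgroup.comap_top]
  · have := hnorm i.castSucc
    exact hp.eq_one_or_self_of_dvd _ (hchief i ▸ Subgroup.relIndex_comap_dvd ι _ _)
  · refine compatible_of_forall_mem_iff φ fun a ↦ ?_
    rw [Subgroup.mem_comap, Subgroup.mem_comap, ← hx a, mul_assoc, (hnorm i).mem_comm_iff,
      mul_inv_cancel_right]
  · have := hnorm i.castSucc
    have := hnorm i.succ
    rw [Subgroup.mem_comap, map_mul, map_inv, ← hx a]
    exact hX.commutator_mem_of_relIndex_eq_prime (hchief i) x ha

/-- Suppose the finite `p`-group `G` (with subgroups `A`, `B` and isomorphism `φ : A ≃* B`)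
embeds via `ι` into a finite `p`-group `X` containing an element `x` with `x⁻¹ι(a)x = ι(φ(a))`
for all `a ∈ A`. Then for any chief series `1 = X₀ ≤ X₁ ≤ ⋯ ≤ Xₙ = X` of `X`, the
subgroups `Gᵢ = G ∩ Xᵢ` form (after deleting repetitions) a chief series of `G`: they are
normal, increase from `1` to `G` with successive factors of order `1` or `p`, they satisfy
`φ(A ∩ Gᵢ) = B ∩ Gᵢ` for all `i`, and `φ(a) ≡ a (mod Gᵢ)` for all `a ∈ A ∩ Gᵢ₊₁`. -/
theorem chief_series_pullback_of_embedding
    (p : ℕ) (hp : p.Prime) (G : Type*) [Group G] [Finite G] (hG : IsPGroup p G)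
    (A B : Subgroup G) (φ : A ≃* B)
    (X : Type*) [Group X] [Finite X] (hX : IsPGroup p X)
    (ι : G →* X) (hι : Function.Injective ι)
    (x : X) (hx : ∀ a : A, x⁻¹ * ι (a : G) * x = ι ((φ a : G)))
    (n : ℕ) (Xs : Fin (n + 1) → Subgroup X)
    (hX0 : Xs 0 = ⊥) (hXn : Xs (Fin.last n) = ⊤) (hmono : Monotone Xs)
    (hnorm : ∀ i, (Xs i).Normal)
    (hchief : ∀ i : Fin n, (Xs i.castSucc).relIndex (Xs i.succ) = p) :
    ((Xs 0).comap ι = ⊥) ∧ ((Xs (Fin.last n)).comap ι = ⊤) ∧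
    Monotone (fun i => (Xs i).comap ι) ∧
    (∀ i, ((Xs i).comap ι).Normal) ∧
    (∀ i : Fin n, ((Xs i.castSucc).comap ι).relIndex ((Xs i.succ).comap ι) = 1 ∨
      ((Xs i.castSucc).comap ι).relIndex ((Xs i.succ).comap ι) = p) ∧
    (∀ i, Compatible φ ((Xs i).comap ι)) ∧
    (∀ i : Fin n, ∀ a : A, (a : G) ∈ (Xs i.succ).comap ι →
      (φ a : G) * (a : G)⁻¹ ∈ (Xs i.castSucc).comap ι) :=
  chief_series_pullback_of_embedding_general p hp G A B φ X hX ι hι x hx n Xs hX0 hXn hmono hnorm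
    hchief
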